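/- A graph G is a partial cube if and only if G is bipartite and the Djoković–Winkler relation Θ is an equivalence relation on E(G). -/

import Mathlib

/-!
In a partial cube distances are Hamming distances, so an edge `uv` flipping coordinate `i` is
`Θ`-related to `xy` exactly when `x` and `y` differ in coordinate `i`; thus `Θ` means "flips the
same coordinate", an equivalence, and the parity of the weight 2-colours the cube.

Conversely, in a bipartite graph `uv Θ ab` says that `a` and `b` lie on opposite sides of the cut
`W_{uv} | W_{vu}`, and transitivity of `Θ` makes `Θ`-related edges define the same cut. One
coordinate per `Θ`-class, recording the side of its cut, embeds the graph isometrically into a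
hypercube: the first edge `ac` of a geodesic from `a` to `b` is the only edge of its class on it,
so one more class separates `a` from `b` than `c` from `b`.
-/

open SimpleGraph

/-- The hypercube graph `Q_n` on vertex set `{0,1}^n`. -/
def cubeGraph (n : ℕ) : SimpleGraph (Fin n → Bool) where
  Adj a b := (Finset.univ.filter fun i => a i ≠ b i).card = 1
  symm := by
    constructor
    intro a b h
    have hset : (Finset.univ.filter fun i => b i ≠ a i) =
        (Finset.univ.filter fun i => a i ≠ b i) := by
      apply Finset.filter_congr; intro i _; exact ne_comm
    rw [hset]; exact h
  loopless := by constructor; intro a h; simp at h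

/-- The simplex graph `S(G)`: vertices are the cliques of `G` (including `∅`),
two cliques adjacent iff they differ in exactly one vertex. -/
noncomputable def simplexGraph {V : Type*} (G : SimpleGraph V) :
    SimpleGraph {s : Finset V // G.IsClique (↑s : Set V)} := by
  classical
  exact
    { Adj := fun a b => (symmDiff a.1 b.1).card = 1
      symm := by constructor; intro a b h; rwa [symmDiff_comm]
      loopless := by constructor; intro a h; simp [symmDiff_self] at h }

/-- A median graph: connected and every triple of vertices has a unique median. -/
def IsMedianGraph {V : Type*} (G : SimpleGraph V) : Prop :=
  G.Connected ∧ ∀ u v w : V, ∃! x : V,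
    G.dist u x + G.dist x v = G.dist u v ∧
    G.dist u x + G.dist x w = G.dist u w ∧
    G.dist v x + G.dist x w = G.dist v w

/-- `f` is an isometric embedding of `G` into the hypercube `Q_n`
(injective, induced, and distance preserving). -/
def IsIsometricEmbedding {V : Type*} (G : SimpleGraph V) (n : ℕ) (f : V → Fin n → Bool) : Prop :=
  Function.Injective f ∧
    (∀ u v, G.Adj u v ↔ (cubeGraph n).Adj (f u) (f v)) ∧
    (∀ u v, G.dist u v = (cubeGraph n).dist (f u) (f v))

/-- A partial cube: a graph isomorphic to an isometric subgraph of a hypercube. -/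
def IsPartialCube {V : Type*} (G : SimpleGraph V) : Prop :=
  ∃ n f, IsIsometricEmbedding G n f

/-- A daisy cube: an isometric subgraph of a hypercube whose vertex set is
downward closed for the coordinatewise order. -/
def IsDaisyCube {V : Type*} (G : SimpleGraph V) : Prop :=
  ∃ n f, IsIsometricEmbedding G n f ∧
    ∀ (u : V) (b : Fin n → Bool), (∀ i, b i ≤ f u i) → ∃ w, f w = b

/-- The isometric dimension of `G`. -/
noncomputable def idim {V : Type*} (G : SimpleGraph V) : ℕ :=
  sInf {n | ∃ f, IsIsometricEmbedding G n f}

/-- The Djoković–Winkler relation `Θ` on (unordered) edges. -/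
def ThetaE {V : Type*} (G : SimpleGraph V) (e f : Sym2 V) : Prop :=
  ∃ u v x y, e = s(u, v) ∧ f = s(x, y) ∧
    G.dist u x + G.dist v y ≠ G.dist u y + G.dist v x

/-- The halfspace `W_{uv}`. -/
def Wset {V : Type*} (G : SimpleGraph V) (u v : V) : Set V :=
  {w | G.dist u w < G.dist v w}

/-- The set `U_{uv}` of vertices of `W_{uv}` incident with an edge of `F_{uv}`. -/
def Uset {V : Type*} (G : SimpleGraph V) (u v : V) : Set V :=
  {w | w ∈ Wset G u v ∧ ∃ b ∈ Wset G v u, G.Adj w b}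

/-- The Θ-classes of the edges `uv` and `xy` cross: all four intersections of
halfspaces are nonempty. -/
def Cross {V : Type*} (G : SimpleGraph V) (u v x y : V) : Prop :=
  (Wset G u v ∩ Wset G x y).Nonempty ∧ (Wset G u v ∩ Wset G y x).Nonempty ∧
  (Wset G v u ∩ Wset G x y).Nonempty ∧ (Wset G v u ∩ Wset G y x).Nonempty

/-- A set of vertices is convex if it contains every geodesic between its points. -/
def ConvexSet {V : Type*} (G : SimpleGraph V) (S : Set V) : Prop :=
  ∀ u ∈ S, ∀ v ∈ S, ∀ p : G.Walk u v, p.length = G.dist u v → ∀ w ∈ p.support, w ∈ S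

/-- The cycle graph on `ZMod m` (for `m ≥ 3`). -/
def cycG (m : ℕ) : SimpleGraph (ZMod m) where
  Adj i j := i ≠ j ∧ (j = i + 1 ∨ i = j + 1)
  symm := by constructor; rintro i j ⟨h, h'⟩; exact ⟨h.symm, h'.symm⟩
  loopless := by constructor; rintro i ⟨h, _⟩; exact h rfl


section Hamming

variable {ι : Type*} [Fintype ι]

theorem hammingDist_eq_one_iff {β : ι → Type*} [∀ i, DecidableEq (β i)] {a b : ∀ i, β i} :
    hammingDist a b = 1 ↔ ∃ i, a i ≠ b i ∧ ∀ j ≠ i, a j = b j := by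
  simp only [hammingDist, Finset.card_eq_one, Finset.eq_singleton_iff_unique_mem,
    Finset.mem_filter, Finset.mem_univ, true_and]
  refine exists_congr fun i => and_congr_right fun _ => forall_congr' fun j => ?_
  rw [not_imp_comm]

theorem hammingDist_eq_add_one_of_ne_of_eq [DecidableEq ι] {β : ι → Type*}
    [∀ i, DecidableEq (β i)] {a b x : ∀ i, β i} {i : ι} (hab : ∀ j ≠ i, a j = b j)
    (ha : a i = x i) (hb : b i ≠ x i) :
    hammingDist b x = hammingDist a x + 1 := by
  have hfilter : Finset.univ.filter (fun j => b j ≠ x j) =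
      insert i (Finset.univ.filter fun j => a j ≠ x j) := by
    ext j
    by_cases hj : j = i
    · subst hj; simp [ha, hb]
    · simp [hj, hab j hj]
  rw [hammingDist, hfilter, Finset.card_insert_of_notMem (by simp [ha])]
  rfl

theorem hammingDist_flip [DecidableEq ι] {a b : ι → Bool} {i : ι}
    (hab : ∀ j ≠ i, a j = b j) (hi : a i ≠ b i) (x : ι → Bool) :
    a i = x i ∧ hammingDist b x = hammingDist a x + 1 ∨
      b i = x i ∧ hammingDist a x = hammingDist b x + 1 := by
  by_cases ha : a i = x i
  · exact .inl ⟨ha, hammingDist_eq_add_one_of_ne_of_eq hab ha (ha ▸ hi.symm)⟩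
  · have hb : b i = x i := by revert hi ha; cases a i <;> cases b i <;> cases x i <;> decide
    exact .inr ⟨hb, hammingDist_eq_add_one_of_ne_of_eq (fun j hj => (hab j hj).symm) hb ha⟩

theorem hammingDist_add_ne_iff [DecidableEq ι] {a b : ι → Bool} {i : ι}
    (hab : ∀ j ≠ i, a j = b j) (hi : a i ≠ b i) (x y : ι → Bool) :
    hammingDist a x + hammingDist b y ≠ hammingDist a y + hammingDist b x ↔ x i ≠ y i := by
  rcases hammingDist_flip hab hi x with ⟨hx, hdx⟩ | ⟨hx, hdx⟩ <;>
  rcases hammingDist_flip hab hi y with ⟨hy, hdy⟩ | ⟨hy, hdy⟩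
  · simp only [← hx, ← hy, ne_eq, not_true_eq_false, iff_false, not_not]; omega
  · simp only [← hx, ← hy, ne_eq, hi, not_false_eq_true, iff_true]; omega
  · simp only [← hx, ← hy, ne_eq, hi.symm, not_false_eq_true, iff_true]; omega
  · simp only [← hx, ← hy, ne_eq, not_true_eq_false, iff_false, not_not]; omega

theorem hammingDist_comp_equiv {κ : Type*} [Fintype κ] (e : κ ≃ ι) (x y : ι → Bool) :
    hammingDist (x ∘ e) (y ∘ e) = hammingDist x y :=
  Finset.card_equiv e (by simp)

end Hamming

section Cube

variable {n : ℕ}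

theorem cubeGraph_adj_iff {a b : Fin n → Bool} : (cubeGraph n).Adj a b ↔ hammingDist a b = 1 :=
  Iff.rfl

theorem hammingDist_le_length {a b : Fin n → Bool} (p : (cubeGraph n).Walk a b) :
    hammingDist a b ≤ p.length := by
  induction p with
  | nil => simp
  | cons h p ih =>
    rw [Walk.length_cons]
    exact (hammingDist_triangle _ _ _).trans (by rw [cubeGraph_adj_iff.mp h]; omega)

theorem exists_walk_length_eq_hammingDist (a b : Fin n → Bool) :
    ∃ p : (cubeGraph n).Walk a b, p.length = hammingDist a b := by
  induction h : hammingDist a b generalizing a with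
  | zero => obtain rfl := hammingDist_eq_zero.mp h; exact ⟨.nil, rfl⟩
  | succ k ih =>
    obtain ⟨i, hi⟩ := Function.ne_iff.mp ((hammingDist_pos (x := a) (y := b)).mp (by omega))
    set a' := Function.update a i (b i)
    have ha' : ∀ j ≠ i, a' j = a j := fun j hj => Function.update_of_ne hj _ _
    have hadj : (cubeGraph n).Adj a a' :=
      hammingDist_eq_one_iff.mpr ⟨i, by simpa [a'] using hi, fun j hj => (ha' j hj).symm⟩
    have hk : hammingDist a' b = k := by
      have := hammingDist_eq_add_one_of_ne_of_eq ha' (by simp [a']) hi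
      omega
    obtain ⟨p, hp⟩ := ih a' hk
    exact ⟨.cons hadj p, by simp [hp]⟩

theorem cubeGraph_dist (a b : Fin n → Bool) : (cubeGraph n).dist a b = hammingDist a b := by
  obtain ⟨p, hp⟩ := exists_walk_length_eq_hammingDist a b
  obtain ⟨q, hq⟩ := Reachable.exists_walk_length_eq_dist ⟨p⟩
  exact le_antisymm (hp ▸ dist_le p) (hq ▸ hammingDist_le_length q)

theorem cubeGraph_colorable_two : (cubeGraph n).Colorable 2 := by
  let c : (cubeGraph n).Coloring Bool :=
    Coloring.mk (fun a => decide (Even (hammingDist a fun _ => false))) fun h => by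
      obtain ⟨i, hi, hab⟩ := hammingDist_eq_one_iff.mp h
      rcases hammingDist_flip hab hi fun _ => false with ⟨-, hd⟩ | ⟨-, hd⟩ <;>
        simp only [hd, Nat.even_add_one, ne_eq, decide_eq_decide] <;> tauto
  simpa using c.colorable

end Cube

section Theta

variable {V : Type*} {G : SimpleGraph V}

theorem thetaE_mk_iff {u v x y : V} :
    ThetaE G s(u, v) s(x, y) ↔ G.dist u x + G.dist v y ≠ G.dist u y + G.dist v x := by
  refine ⟨?_, fun h => ⟨u, v, x, y, rfl, rfl, h⟩⟩
  rintro ⟨u', v', x', y', he, hf, hd⟩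
  rcases Sym2.eq_iff.mp he with ⟨rfl, rfl⟩ | ⟨rfl, rfl⟩ <;>
    rcases Sym2.eq_iff.mp hf with ⟨rfl, rfl⟩ | ⟨rfl, rfl⟩ <;> omega

theorem ThetaE.symm {e f : Sym2 V} (h : ThetaE G e f) : ThetaE G f e := by
  obtain ⟨u, v, x, y, rfl, rfl, hd⟩ := h
  refine ⟨x, y, u, v, rfl, rfl, ?_⟩
  simp only [G.dist_comm (u := x), G.dist_comm (u := y)]
  omega

theorem thetaE_self_of_mem_edgeSet {e : Sym2 V} (he : e ∈ G.edgeSet) : ThetaE G e e := by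
  induction e using Sym2.inductionOn with
  | _ u v =>
    rw [thetaE_mk_iff, dist_self, dist_self, dist_eq_one_iff_adj.mpr he,
      dist_eq_one_iff_adj.mpr (G.adj_symm he)]
    omega

end Theta

namespace IsIsometricEmbedding

variable {V : Type*} {G : SimpleGraph V} {n : ℕ} {f : V → Fin n → Bool}

theorem dist_eq_hammingDist (hf : IsIsometricEmbedding G n f) (u v : V) :
    G.dist u v = hammingDist (f u) (f v) := by
  rw [hf.2.2, cubeGraph_dist]

theorem colorable_two (hf : IsIsometricEmbedding G n f) : G.Colorable 2 :=
  cubeGraph_colorable_two.of_hom ⟨f, (hf.2.1 _ _).mp⟩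

theorem thetaE_iff (hf : IsIsometricEmbedding G n f) {u v : V} {i : Fin n}
    (huv : ∀ j ≠ i, f u j = f v j) (hi : f u i ≠ f v i) (x y : V) :
    ThetaE G s(u, v) s(x, y) ↔ f x i ≠ f y i := by
  simp only [thetaE_mk_iff, hf.dist_eq_hammingDist]
  exact hammingDist_add_ne_iff huv hi _ _

theorem thetaE_trans (hf : IsIsometricEmbedding G n f) {e₁ e₂ e₃ : Sym2 V}
    (he₁ : e₁ ∈ G.edgeSet) (he₂ : e₂ ∈ G.edgeSet) (h₁₂ : ThetaE G e₁ e₂)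
    (h₂₃ : ThetaE G e₂ e₃) :
    ThetaE G e₁ e₃ := by
  induction e₁ using Sym2.inductionOn with | _ u v =>
  induction e₂ using Sym2.inductionOn with | _ x y =>
  induction e₃ using Sym2.inductionOn with | _ a b =>
  obtain ⟨i, hi, huv⟩ := hammingDist_eq_one_iff.mp ((hf.2.1 u v).mp he₁)
  have hxy : f x i ≠ f y i := (hf.thetaE_iff huv hi x y).mp h₁₂
  have hxy' : ∀ j ≠ i, f x j = f y j := by
    obtain ⟨k, hk, hxy'⟩ := hammingDist_eq_one_iff.mp ((hf.2.1 x y).mp he₂)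
    obtain rfl : i = k := by_contra fun hik => hxy (hxy' i hik)
    exact hxy'
  exact (hf.thetaE_iff huv hi a b).mpr ((hf.thetaE_iff hxy' hxy a b).mp h₂₃)

end IsIsometricEmbedding

section Bipartite

variable {V : Type*} {G : SimpleGraph V}

/-- Two geodesics of equal length from `u` and `v` to `w`, closed up by the edge `uv`, would form
an odd closed walk. -/
theorem dist_ne_dist_of_adj (hconn : G.Connected) (hbip : G.Colorable 2) {u v : V}
    (huv : G.Adj u v) (w : V) : G.dist u w ≠ G.dist v w := by
  intro heq
  obtain ⟨p, hp⟩ := hconn.exists_walk_length_eq_dist u w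
  obtain ⟨q, hq⟩ := hconn.exists_walk_length_eq_dist v w
  have heven := two_colorable_iff_forall_loop_even.mp hbip u ((Walk.cons huv q).append p.reverse)
  rw [Walk.length_append, Walk.length_cons, Walk.length_reverse, hp, hq, heq] at heven
  exact Nat.not_even_iff_odd.mpr ⟨G.dist v w, by ring⟩ heven

theorem dist_eq_dist_add_one_or (hconn : G.Connected) (hbip : G.Colorable 2) {u v : V}
    (huv : G.Adj u v) (w : V) :
    G.dist v w = G.dist u w + 1 ∨ G.dist u w = G.dist v w + 1 := by
  have hvw : G.dist v w ≤ G.dist v u + G.dist u w := hconn.dist_triangle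
  have huw : G.dist u w ≤ G.dist u v + G.dist v w := hconn.dist_triangle
  rw [dist_eq_one_iff_adj.mpr huv] at huw
  rw [dist_eq_one_iff_adj.mpr huv.symm] at hvw
  have := dist_ne_dist_of_adj hconn hbip huv w
  omega

theorem thetaE_iff_not_mem_wset_iff (hconn : G.Connected) (hbip : G.Colorable 2) {u v : V}
    (huv : G.Adj u v) (a b : V) :
    ThetaE G s(u, v) s(a, b) ↔ ¬(a ∈ Wset G u v ↔ b ∈ Wset G u v) := by
  simp only [thetaE_mk_iff, Wset, Set.mem_ofPred_eq]
  rcases dist_eq_dist_add_one_or hconn hbip huv a with ha | ha <;>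
    rcases dist_eq_dist_add_one_or hconn hbip huv b with hb | hb <;> omega

end Bipartite

section Winkler

variable {V : Type*} {G : SimpleGraph V}

theorem isPartialCube_of_dist_eq_hammingDist {ι : Type*} [Fintype ι] (hconn : G.Connected)
    (g : V → ι → Bool) (hg : ∀ a b, G.dist a b = hammingDist (g a) (g b)) :
    IsPartialCube G := by
  let e := (Fintype.equivFin ι).symm
  have hdist : ∀ a b, G.dist a b = (cubeGraph _).dist (g a ∘ e) (g b ∘ e) := fun a b => by
    rw [cubeGraph_dist, hammingDist_comp_equiv, hg]
  refine ⟨_, fun w => g w ∘ e, fun a b hab => ?_, fun a b => ?_, hdist⟩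
  · rw [← hconn.dist_eq_zero_iff, hdist, show g a ∘ e = g b ∘ e from hab, dist_self]
  · rw [← dist_eq_one_iff_adj, ← dist_eq_one_iff_adj, hdist]

variable (htrans : ∀ e ∈ G.edgeSet, ∀ f ∈ G.edgeSet, ∀ g ∈ G.edgeSet,
    ThetaE G e f → ThetaE G f g → ThetaE G e g)

def thetaSetoid : Setoid G.Dart where
  r d d' := ThetaE G d.edge d'.edge
  iseqv := ⟨fun d => thetaE_self_of_mem_edgeSet d.edge_mem, ThetaE.symm,
    fun h h' => htrans _ (Dart.edge_mem _) _ (Dart.edge_mem _) _ (Dart.edge_mem _) h h'⟩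

open Classical in
/-- Another representative of `q` may orient the cut the other way, complementing this coordinate;
Hamming distances do not see the difference. -/
noncomputable def halfspaceVector (w : V) (q : Quotient (thetaSetoid htrans)) : Bool :=
  decide (w ∈ Wset G q.out.fst q.out.snd)

variable (hconn : G.Connected) (hbip : G.Colorable 2)
include hconn hbip htrans

/-- Along any walk, an edge crosses `W_{uv}` iff it is `Θ`-related to `uv`, iff (by
transitivity) it is `Θ`-related to `xy`, iff it crosses `W_{xy}`. -/
theorem mem_wset_iff_iff_of_thetaE {u v x y : V} (huv : G.Adj u v) (hxy : G.Adj x y)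
    (h : ThetaE G s(u, v) s(x, y)) (a b : V) :
    (a ∈ Wset G u v ↔ b ∈ Wset G u v) ↔ (a ∈ Wset G x y ↔ b ∈ Wset G x y) := by
  induction (hconn a b).some with
  | nil => simp only [iff_self]
  | @cons a c b hac _ ih =>
    have hcross : ThetaE G s(u, v) s(a, c) ↔ ThetaE G s(x, y) s(a, c) :=
      ⟨htrans _ hxy _ huv _ hac h.symm, htrans _ huv _ hxy _ hac h⟩
    rw [thetaE_iff_not_mem_wset_iff hconn hbip huv,
      thetaE_iff_not_mem_wset_iff hconn hbip hxy, not_iff_not] at hcross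
    tauto

theorem halfspaceVector_eq_iff_of_mk_eq {d : G.Dart} {q : Quotient (thetaSetoid htrans)}
    (hq : ⟦d⟧ = q) (a b : V) :
    halfspaceVector htrans a q = halfspaceVector htrans b q ↔
      (a ∈ Wset G d.fst d.snd ↔ b ∈ Wset G d.fst d.snd) := by
  have hd : ThetaE G q.out.edge d.edge :=
    Quotient.exact (s := thetaSetoid htrans) (q.out_eq.trans hq.symm)
  simp only [halfspaceVector, decide_eq_decide]
  exact mem_wset_iff_iff_of_thetaE htrans hconn hbip q.out.adj d.adj hd a b

theorem halfspaceVector_ne_iff_of_adj {a c : V} (hac : G.Adj a c)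
    (q : Quotient (thetaSetoid htrans)) :
    halfspaceVector htrans a q ≠ halfspaceVector htrans c q ↔ q = ⟦⟨(a, c), hac⟩⟧ :=
  calc _ ↔ ¬(a ∈ Wset G q.out.fst q.out.snd ↔ c ∈ Wset G q.out.fst q.out.snd) := by
        simp only [halfspaceVector, ne_eq, decide_eq_decide]
    _ ↔ ThetaE G q.out.edge s(a, c) :=
      (thetaE_iff_not_mem_wset_iff hconn hbip q.out.adj a c).symm
    _ ↔ ⟦q.out⟧ = ⟦⟨(a, c), hac⟩⟧ :=
      (Quotient.eq (r := thetaSetoid htrans) (x := q.out) (y := ⟨(a, c), hac⟩)).symm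
    _ ↔ q = ⟦⟨(a, c), hac⟩⟧ := by rw [Quotient.out_eq]

open Classical in
theorem hammingDist_halfspaceVector [Fintype V] (a b : V) :
    hammingDist (halfspaceVector htrans a) (halfspaceVector htrans b) = G.dist a b := by
  induction hab : G.dist a b generalizing a with
  | zero => rw [(hconn.dist_eq_zero_iff).mp hab, hammingDist_self]
  | succ N ih =>
    obtain ⟨p, hp⟩ := hconn.exists_walk_length_eq_dist a b
    cases p with
    | nil => simp at hab
    | @cons _ c _ hac p =>
      have hcb : G.dist c b = N := by
        have : G.dist c b ≤ p.length := dist_le p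
        have : G.dist a b ≤ G.dist a c + G.dist c b := hconn.dist_triangle
        rw [Walk.length_cons] at hp
        rw [dist_eq_one_iff_adj.mpr hac] at *
        omega
      set q₀ : Quotient (thetaSetoid htrans) := ⟦⟨(a, c), hac⟩⟧
      have hac₀ : halfspaceVector htrans a q₀ ≠ halfspaceVector htrans c q₀ :=
        (halfspaceVector_ne_iff_of_adj htrans hconn hbip hac q₀).mpr rfl
      have hcb₀ : halfspaceVector htrans c q₀ = halfspaceVector htrans b q₀ := by
        refine (halfspaceVector_eq_iff_of_mk_eq htrans hconn hbip rfl c b).mpr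
          (iff_of_false ?_ ?_)
        · simp [Wset, dist_eq_one_iff_adj.mpr hac]
        · simp only [Wset, Set.mem_ofPred_eq, hab, hcb]; omega
      have hca : ∀ q ≠ q₀, halfspaceVector htrans c q = halfspaceVector htrans a q :=
        fun q hq => by_contra fun h =>
          hq ((halfspaceVector_ne_iff_of_adj htrans hconn hbip hac q).mp (Ne.symm h))
      rw [hammingDist_eq_add_one_of_ne_of_eq hca hcb₀ (hcb₀ ▸ hac₀), ih c hcb]

end Winkler

/-- Winkler's theorem: a connected graph is a partial cube iff it is bipartite and
the Djoković–Winkler relation `Θ` is an equivalence relation on its edge set. -/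
theorem stmt6 {V : Type*} [Fintype V] (G : SimpleGraph V) (hconn : G.Connected) :
    IsPartialCube G ↔
      G.Colorable 2 ∧
      (∀ e ∈ G.edgeSet, ThetaE G e e) ∧
      (∀ e ∈ G.edgeSet, ∀ f ∈ G.edgeSet, ThetaE G e f → ThetaE G f e) ∧
      (∀ e ∈ G.edgeSet, ∀ f ∈ G.edgeSet, ∀ g ∈ G.edgeSet,
        ThetaE G e f → ThetaE G f g → ThetaE G e g) := by
  constructor
  · rintro ⟨n, f, hf⟩
    exact ⟨hf.colorable_two, fun _ => thetaE_self_of_mem_edgeSet,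
      fun _ _ _ _ h => h.symm, fun _ he₁ _ he₂ _ _ => hf.thetaE_trans he₁ he₂⟩
  · rintro ⟨hbip, -, -, htrans⟩
    classical
    exact isPartialCube_of_dist_eq_hammingDist hconn (halfspaceVector htrans)
      fun a b => (hammingDist_halfspaceVector htrans hconn hbip a b).symm
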